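/- In the traveler's dilemma with reward parameter r = 2, the profile (100, 100) is the unique optimin point; in particular its guaranteed-value vector (97, 97) weakly dominates the guaranteed-value vector of every other strategy profile, with a strict inequality in at least one coordinate. -/
import Mathlib


/-- The common strategy set `{2, 3, …, 100}` of the traveler's dilemma. -/
def S : Set ℤ := Set.Icc 2 100

/-- Player 1's payoff with reward/punishment parameter `r`. -/
def u1 (r a b : ℤ) : ℤ := if a < b then a + r else if a = b then a else b - r

/-- Player 2's payoff: the game is symmetric. -/
def u2 (r a b : ℤ) : ℤ := u1 r b a

/-- Nash equilibrium of the traveler's dilemma with parameter `r`. -/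
def IsNash (r a b : ℤ) : Prop :=
  a ∈ S ∧ b ∈ S ∧ (∀ a' ∈ S, u1 r a b ≥ u1 r a' b) ∧ (∀ b' ∈ S, u2 r a b ≥ u2 r a b')

/-- Player 1's profitable-deviation set `B_1(a, b)` (including staying put). -/
def Dev1 (r a b : ℤ) : Set ℤ := {a' ∈ S | u1 r a' b > u1 r a b} ∪ {a}

/-- Player 2's profitable-deviation set `B_2(a, b)` (including staying put). -/
def Dev2 (r a b : ℤ) : Set ℤ := {b' ∈ S | u2 r a b' > u2 r a b} ∪ {b}

/-- Player 1's guaranteed value `v_1(a, b)`. -/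
noncomputable def v1 (r a b : ℤ) : ℤ := sInf ((fun b' => u1 r a b') '' Dev2 r a b)

/-- Player 2's guaranteed value `v_2(a, b)`. -/
noncomputable def v2 (r a b : ℤ) : ℤ := sInf ((fun a' => u2 r a' b) '' Dev1 r a b)

/-- Optimin point: no profile (in the strategy set) weakly dominates it in
guaranteed values with a strict improvement for some player. -/
def IsOptimin (r a b : ℤ) : Prop :=
  ¬ ∃ a' ∈ S, ∃ b' ∈ S, (v1 r a' b' ≥ v1 r a b ∧ v2 r a' b' ≥ v2 r a b) ∧
    (v1 r a' b' > v1 r a b ∨ v2 r a' b' > v2 r a b)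

lemma vswap (r a b : ℤ) : v2 r a b = v1 r b a := rfl

lemma TD.bdd {a b : ℤ} (ha : a ∈ S) (hb : b ∈ S) :
    BddBelow ((fun b' => u1 2 a b') '' Dev2 2 a b) := by
  refine ⟨0, ?_⟩
  rintro y ⟨b', hb', rfl⟩
  have hb'S : b' ∈ S := by
    rcases hb' with ⟨h, _⟩ | h
    · exact h
    · simpa [Set.mem_singleton_iff.mp h]
  simp only [S, Set.mem_Icc] at ha hb'S
  simp only [u1]
  split_ifs <;> omega

lemma TD.v1_le {a b x : ℤ} (ha : a ∈ S) (hb : b ∈ S) (hx : x ∈ Dev2 2 a b) :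
    v1 2 a b ≤ u1 2 a x :=
  csInf_le (TD.bdd ha hb) ⟨x, hx, rfl⟩

lemma TD.mem_self {a b : ℤ} : b ∈ Dev2 2 a b := Or.inr rfl

lemma TD.mem_dev {a b x : ℤ} (hxS : x ∈ S) (h : u1 2 x a > u1 2 b a) :
    x ∈ Dev2 2 a b := Or.inl ⟨hxS, h⟩

-- Case b < a : v1 ≤ b - 2
lemma TD.LA {a b : ℤ} (ha : a ∈ S) (hb : b ∈ S) (h : b < a) : v1 2 a b ≤ b - 2 := by
  have := TD.v1_le ha hb (TD.mem_self (a := a) (b := b))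
  have hv : u1 2 a b = b - 2 := by unfold u1; split_ifs <;> omega
  omega

-- Case a < b, a ≥ 5 : v1 ≤ a - 5
lemma TD.LB {a b : ℤ} (ha : a ∈ S) (hb : b ∈ S) (h : a < b) (h5 : 5 ≤ a) :
    v1 2 a b ≤ a - 5 := by
  simp only [S, Set.mem_Icc] at ha hb
  have hmem : a - 3 ∈ Dev2 2 a b := by
    refine TD.mem_dev ?_ ?_
    · simp only [S, Set.mem_Icc]; omega
    · unfold u1; split_ifs <;> omega
  have := TD.v1_le (by simp only [S, Set.mem_Icc]; omega)
      (by simp only [S, Set.mem_Icc]; omega) hmem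
  have hv : u1 2 a (a - 3) = a - 5 := by unfold u1; split_ifs <;> omega
  omega

-- Case a < b : v1 ≤ a
lemma TD.LC {a b : ℤ} (ha : a ∈ S) (hb : b ∈ S) (h : a < b) : v1 2 a b ≤ a := by
  simp only [S, Set.mem_Icc] at ha hb
  have hmem : a ∈ Dev2 2 a b := by
    refine TD.mem_dev ?_ ?_
    · simp only [S, Set.mem_Icc]; omega
    · unfold u1; split_ifs <;> omega
  have := TD.v1_le (by simp only [S, Set.mem_Icc]; omega)
      (by simp only [S, Set.mem_Icc]; omega) hmem
  have hv : u1 2 a a = a := by unfold u1; split_ifs <;> omega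
  omega

-- Case a = b, 3 ≤ b ≤ 99 : v1 ≤ b - 3
lemma TD.LD {b : ℤ} (h3 : 3 ≤ b) (h99 : b ≤ 99) : v1 2 b b ≤ b - 3 := by
  have hbS : b ∈ S := by simp only [S, Set.mem_Icc]; omega
  have hmem : b - 1 ∈ Dev2 2 b b := by
    refine TD.mem_dev ?_ ?_
    · simp only [S, Set.mem_Icc]; omega
    · unfold u1; split_ifs <;> omega
  have := TD.v1_le hbS hbS hmem
  have hv : u1 2 b (b - 1) = b - 3 := by unfold u1; split_ifs <;> omega
  omega

lemma TD.L2 : v1 2 2 2 ≤ 2 := by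
  have h2S : (2 : ℤ) ∈ S := by simp only [S, Set.mem_Icc]; omega
  have := TD.v1_le h2S h2S (TD.mem_self (a := 2) (b := 2))
  have hv : u1 2 2 2 = 2 := by unfold u1; split_ifs <;> omega
  omega

lemma TD.v1_100 : v1 2 100 100 = 97 := by
  have h100 : (100 : ℤ) ∈ S := by simp only [S, Set.mem_Icc]; omega
  have hle : v1 2 100 100 ≤ 97 := by
    have hmem : (99 : ℤ) ∈ Dev2 2 100 100 := by
      refine TD.mem_dev ?_ ?_
      · simp only [S, Set.mem_Icc]; omega
      · unfold u1; split_ifs <;> omega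
    have := TD.v1_le h100 h100 hmem
    have hv : u1 2 100 99 = 97 := by unfold u1; split_ifs <;> omega
    omega
  have hge : 97 ≤ v1 2 100 100 := by
    apply le_csInf (Set.nonempty_of_mem (Set.mem_image_of_mem _ (TD.mem_self (a := 100) (b := 100))))
    rintro y ⟨b', hb', rfl⟩
    rcases hb' with ⟨hb'S, hgt⟩ | h
    · simp only [S, Set.mem_Icc] at hb'S
      simp only [u2, u1] at hgt ⊢
      split_ifs at hgt ⊢ <;> omega
    · have hb100 : b' = 100 := Set.mem_singleton_iff.mp h
      subst hb100
      simp only [u1]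
      split_ifs <;> omega
  omega

-- main dominance lemma
lemma TD.H4 {a b : ℤ} (ha : a ∈ S) (hb : b ∈ S) (hne : ¬(a = 100 ∧ b = 100)) :
    v1 2 a b ≤ 97 ∧ v2 2 a b ≤ 97 ∧ (v1 2 a b < 97 ∨ v2 2 a b < 97) := by
  have haI := ha; have hbI := hb
  simp only [S, Set.mem_Icc] at haI hbI
  rw [vswap]
  rcases lt_trichotomy a b with h | h | h
  · -- a < b : v1 small, v2 = v1 2 b a with a < b (second < first)
    have h1 : v1 2 a b < 97 := by
      by_cases h5 : 5 ≤ a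
      · have := TD.LB ha hb h h5; omega
      · have := TD.LC ha hb h; omega
    have h2 : v1 2 b a ≤ 97 := by
      have := TD.LA hb ha h; omega
    exact ⟨by omega, h2, Or.inl h1⟩
  · -- a = b
    subst h
    by_cases h100 : a = 100
    · exact absurd ⟨h100, h100⟩ hne
    by_cases h3 : 3 ≤ a
    · have := TD.LD h3 (by omega : a ≤ 99)
      exact ⟨by omega, by omega, Or.inl (by omega)⟩
    · have h2 : a = 2 := by omega
      subst h2
      have := TD.L2
      exact ⟨by omega, by omega, Or.inl (by omega)⟩
  · -- b < a
    have h1 : v1 2 a b ≤ 97 := by have := TD.LA ha hb h; omega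
    have h2 : v1 2 b a < 97 := by
      by_cases h5 : 5 ≤ b
      · have := TD.LB hb ha h h5; omega
      · have := TD.LC hb ha h; omega
    exact ⟨h1, by omega, Or.inr h2⟩


/-- For `r = 2`, `(100, 100)` is the unique optimin point: its guaranteed-value
vector is `(97, 97)`, and it weakly dominates the guaranteed-value vector of
every other profile, strictly in at least one coordinate. -/
theorem travelers_dilemma_unique_optimin_r2 :
    (∀ a b : ℤ, a ∈ S → b ∈ S → (IsOptimin 2 a b ↔ a = 100 ∧ b = 100)) ∧
    v1 2 100 100 = 97 ∧ v2 2 100 100 = 97 ∧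
    (∀ a b : ℤ, a ∈ S → b ∈ S → ¬(a = 100 ∧ b = 100) →
      v1 2 a b ≤ 97 ∧ v2 2 a b ≤ 97 ∧ (v1 2 a b < 97 ∨ v2 2 a b < 97)) := by
  have h100S : (100 : ℤ) ∈ S := by simp only [S, Set.mem_Icc]; omega
  have hv1 : v1 2 100 100 = 97 := TD.v1_100
  have hv2 : v2 2 100 100 = 97 := by rw [vswap]; exact TD.v1_100
  refine ⟨?_, hv1, hv2, fun a b ha hb hne => TD.H4 ha hb hne⟩
  intro a b ha hb
  constructor
  · intro hopt
    by_contra hne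
    exact hopt ⟨100, h100S, 100, h100S,
      ⟨by have := TD.H4 ha hb hne; omega, by have := TD.H4 ha hb hne; omega⟩,
      by rcases (TD.H4 ha hb hne).2.2 with h | h
         · exact Or.inl (by omega)
         · exact Or.inr (by omega)⟩
  · rintro ⟨rfl, rfl⟩
    rintro ⟨a', ha', b', hb', ⟨hge1, hge2⟩, hstrict⟩
    rw [hv1] at hge1; rw [hv2] at hge2
    by_cases hne : a' = 100 ∧ b' = 100
    · obtain ⟨rfl, rfl⟩ := hne
      rcases hstrict with h | h
      · rw [hv1] at h; omega
      · rw [hv2] at h; omega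
    · have := TD.H4 ha' hb' hne
      omega
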